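/- Let U be a p×d real matrix with columns u_1, …, u_d such that UᵗU = I_d (d < p), let C be a symmetric positive semidefinite p×p real matrix such that Uᵗ C U is positive definite and trace(C) − ∑_{j=1}^d u_jᵗ C u_j > 0, and let n_k > 0, π_k > 0. Then the function (Σ, β) ↦ −(n_k/2)[ trace(Σ⁻¹ Uᵗ C U) + log(det Σ) + (p−d) log β + (1/β)(trace(C) − ∑_{j=1}^d u_jᵗ C u_j) ], defined for Σ a symmetric positive definite d×d matrix and β > 0, attains its unique maximum at Σ̂ = Uᵗ C U and β̂ = (trace(C) − ∑_{j=1}^d u_jᵗ C u_j)/(p−d). -/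

import Mathlib

/-! The objective splits into a part in `Σ` and a part in `β`, and both reduce to
`log x ≤ x - 1`, with equality only at `x = 1`: for `β` take `x = β̂ / β`; for `Σ` apply it to
the eigenvalues of `Σ^{-1/2} A Σ^{-1/2}`, whose trace is `tr (Σ⁻¹ A)` and whose determinant is
`det A / det Σ`. -/

open Matrix

/-- The part of the conditional expectation of the complete log-likelihood (model
DLM_[Σ_kβ_k]) depending on the variance parameters `(Sig, β)`:
`-(n_k/2) [ trace (Sig⁻¹ A) + log det Sig + (p-d) log β + (1/β) c ]`,
where `A = Uᵗ C U` and `c = trace C - ∑ j, u_jᵗ C u_j`. -/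
noncomputable def dlmVarObjective (p d : ℕ) (nk : ℝ) (A : Matrix (Fin d) (Fin d) ℝ)
    (c : ℝ) (Sig : Matrix (Fin d) (Fin d) ℝ) (β : ℝ) : ℝ :=
  -(nk / 2) * ((Sig⁻¹ * A).trace + Real.log Sig.det
    + ((p : ℝ) - (d : ℝ)) * Real.log β + (1 / β) * c)

namespace Real

lemma sub_log_sub_one_nonneg {x : ℝ} (hx : 0 < x) : 0 ≤ x - log x - 1 := by
  linarith [log_le_sub_one_of_pos hx]

lemma sub_log_sub_one_eq_zero_iff {x : ℝ} (hx : 0 < x) : x - log x - 1 = 0 ↔ x = 1 := by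
  refine ⟨fun h => ?_, fun h => by simp [h]⟩
  by_contra hx1
  linarith [log_lt_sub_one_of_pos hx hx1]

lemma mul_log_add_div_le {m c β : ℝ} (hm : 0 < m) (hc : 0 < c) (hβ : 0 < β) :
    m * log (c / m) + (1 / (c / m)) * c ≤ m * log β + (1 / β) * c ∧
      (m * log β + (1 / β) * c = m * log (c / m) + (1 / (c / m)) * c → β = c / m) := by
  obtain ⟨t, ht_def⟩ : ∃ t, t = c / m / β := ⟨_, rfl⟩
  have ht : 0 < t := ht_def ▸ by positivity
  have hgap : m * log β + (1 / β) * c - (m * log (c / m) + (1 / (c / m)) * c)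
      = m * (t - log t - 1) := by
    rw [ht_def, log_div (by positivity) hβ.ne', log_div hc.ne' hm.ne']
    field_simp
    ring
  refine ⟨by nlinarith [sub_log_sub_one_nonneg ht], fun h => ?_⟩
  have ht1 : t = 1 :=
    (sub_log_sub_one_eq_zero_iff ht).1 <| (mul_eq_zero.1 (by linarith)).resolve_left hm.ne'
  exact ((div_eq_one_iff_eq hβ.ne').1 (ht_def ▸ ht1)).symm

end Real

namespace Matrix

variable {n : Type*} [Fintype n] [DecidableEq n]

lemma IsHermitian.eq_one_of_eigenvalues_eq_one {B : Matrix n n ℝ} (hB : B.IsHermitian)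
    (h : ∀ i, hB.eigenvalues i = 1) : B = 1 := by
  rw [hB.spectral_theorem, show RCLike.ofReal ∘ hB.eigenvalues = 1 by funext i; simp [h i]]
  simp

lemma PosDef.card_add_log_det_le_trace {B : Matrix n n ℝ} (hB : B.PosDef) :
    Fintype.card n + Real.log B.det ≤ B.trace ∧
      (B.trace = Fintype.card n + Real.log B.det → B = 1) := by
  have hgap : B.trace - (Fintype.card n + Real.log B.det)
      = ∑ i, (hB.1.eigenvalues i - Real.log (hB.1.eigenvalues i) - 1) := by
    rw [hB.1.trace_eq_sum_eigenvalues, hB.1.det_eq_prod_eigenvalues]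
    simp only [RCLike.ofReal_real_eq_id, id_eq]
    rw [Real.log_prod fun i _ => (hB.eigenvalues_pos i).ne']
    simp only [Finset.sum_sub_distrib, Finset.sum_const, Finset.card_univ, nsmul_eq_mul, mul_one]
    ring
  have hterm := fun i => Real.sub_log_sub_one_nonneg (hB.eigenvalues_pos i)
  refine ⟨by linarith [Finset.sum_nonneg fun i (_ : i ∈ Finset.univ) => hterm i],
    fun h => hB.1.eq_one_of_eigenvalues_eq_one fun i => ?_⟩
  rw [sub_eq_zero.2 h, eq_comm, Finset.sum_eq_zero_iff_of_nonneg fun i _ => hterm i] at hgap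
  exact (Real.sub_log_sub_one_eq_zero_iff (hB.eigenvalues_pos i)).1 (hgap i (Finset.mem_univ i))

open scoped MatrixOrder in
lemma PosDef.log_det_add_card_le_trace_inv_mul_add_log_det {A S : Matrix n n ℝ}
    (hA : A.PosDef) (hS : S.PosDef) :
    Real.log A.det + Fintype.card n ≤ (S⁻¹ * A).trace + Real.log S.det ∧
      ((S⁻¹ * A).trace + Real.log S.det = Real.log A.det + Fintype.card n → S = A) := by
  set R := CFC.sqrt S⁻¹
  have hRR : R * R = S⁻¹ := CFC.sqrt_mul_sqrt_self _ hS.inv.posSemidef.nonneg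
  have hR : R.PosDef := (IsStrictlyPositive.sqrt _ hS.inv.isStrictlyPositive).posDef
  have hB : (R * A * R).PosDef := by
    simpa only [hR.1.eq] using
      hA.conjTranspose_mul_mul_same (mulVec_injective_iff_isUnit.2 hR.isUnit)
  have htrace : (R * A * R).trace = (S⁻¹ * A).trace := by
    rw [trace_mul_comm, ← mul_assoc, hRR]
  have hlogdet : Real.log (R * A * R).det = Real.log A.det - Real.log S.det := by
    rw [det_mul, det_mul, mul_right_comm, ← det_mul, mul_comm, hRR, det_nonsing_inv,
      Ring.inverse_eq_inv', Real.log_mul hA.det_pos.ne' (inv_pos.2 hS.det_pos).ne',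
      Real.log_inv]
    ring
  obtain ⟨hle, heq⟩ := hB.card_add_log_det_le_trace
  refine ⟨by linarith, fun h => ?_⟩
  have hAS : A * S⁻¹ = 1 := by
    rw [← hRR, ← mul_assoc]
    exact mul_eq_one_comm.1 (by rw [← mul_assoc]; exact heq (by linarith))
  rw [← inv_eq_left_inv hAS, nonsing_inv_nonsing_inv _ hS.det_pos.ne'.isUnit]

end Matrix

theorem stmt_12_general (p d : ℕ) (hdp : d < p)
    (U : Matrix (Fin p) (Fin d) ℝ)
    (C : Matrix (Fin p) (Fin p) ℝ)
    (hUCU : (Uᵀ * C * U).PosDef)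
    (c : ℝ)
    (hcpos : 0 < c)
    (nk : ℝ) (hnk : 0 < nk)
    (βhat : ℝ) (hβhat : βhat = c / ((p : ℝ) - (d : ℝ))) :
    ∀ (Sig : Matrix (Fin d) (Fin d) ℝ) (β : ℝ), Sig.PosDef → 0 < β →
      (dlmVarObjective p d nk (Uᵀ * C * U) c Sig β
          ≤ dlmVarObjective p d nk (Uᵀ * C * U) c (Uᵀ * C * U) βhat) ∧
      (dlmVarObjective p d nk (Uᵀ * C * U) c Sig β
          = dlmVarObjective p d nk (Uᵀ * C * U) c (Uᵀ * C * U) βhat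
        → Sig = Uᵀ * C * U ∧ β = βhat) := by
  intro Sig β hSig hβ
  have hpd : 0 < (p : ℝ) - d := sub_pos.2 (by exact_mod_cast hdp)
  obtain ⟨hSig_le, hSig_eq⟩ := hUCU.log_det_add_card_le_trace_inv_mul_add_log_det hSig
  obtain ⟨hβ_le, hβ_eq⟩ := Real.mul_log_add_div_le hpd hcpos hβ
  have htrace : ((Uᵀ * C * U)⁻¹ * (Uᵀ * C * U)).trace = d := by
    rw [nonsing_inv_mul _ hUCU.det_pos.ne'.isUnit, trace_one, Fintype.card_fin]
  rw [Fintype.card_fin] at hSig_le hSig_eq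
  unfold dlmVarObjective
  rw [htrace, hβhat]
  have hnk2 : -(nk / 2) ≠ 0 := by linarith
  refine ⟨mul_le_mul_of_nonpos_left (by linarith) (by linarith), fun h => ?_⟩
  have hsum := mul_left_cancel₀ hnk2 h
  exact ⟨hSig_eq (by linarith), hβ_eq (by linarith)⟩

/-- Proposition 3 for the model DLM_[Σ_kβ_k]: the variance parameters maximizing the
objective are `Σ̂ = Uᵗ C U` and `β̂ = (trace C - ∑ j, u_jᵗ C u_j) / (p - d)`, and this
maximizer is unique. -/
theorem stmt_12 (p d : ℕ) (hdp : d < p)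
    (U : Matrix (Fin p) (Fin d) ℝ) (hU : Uᵀ * U = 1)
    (C : Matrix (Fin p) (Fin p) ℝ) (hC : C.PosSemidef)
    (hUCU : (Uᵀ * C * U).PosDef)
    (c : ℝ) (hc : c = C.trace - ∑ j : Fin d, (fun i => U i j) ⬝ᵥ C.mulVec (fun i => U i j))
    (hcpos : 0 < c)
    (nk πk : ℝ) (hnk : 0 < nk) (hπk : 0 < πk)
    (βhat : ℝ) (hβhat : βhat = c / ((p : ℝ) - (d : ℝ))) :
    ∀ (Sig : Matrix (Fin d) (Fin d) ℝ) (β : ℝ), Sig.PosDef → 0 < β →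
      (dlmVarObjective p d nk (Uᵀ * C * U) c Sig β
          ≤ dlmVarObjective p d nk (Uᵀ * C * U) c (Uᵀ * C * U) βhat) ∧
      (dlmVarObjective p d nk (Uᵀ * C * U) c Sig β
          = dlmVarObjective p d nk (Uᵀ * C * U) c (Uᵀ * C * U) βhat
        → Sig = Uᵀ * C * U ∧ β = βhat) :=
  stmt_12_general p d hdp U C hUCU c hcpos nk hnk βhat hβhat
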